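/- Let L be a GNS-symmetric Lindblad generator with respect to a full-rank state σ, with Lindblad operators {A_j}_{j∈J} and Bohr frequencies ω_j, and let L_* be its trace adjoint, L_*(ρ) = Σ_j e^{−ω_j/2}(A_j*A_jρ − A_jρA_j*) + e^{ω_j/2}(ρA_jA_j* − A_j*ρA_j). The following are equivalent: (i) L is primitive with respect to σ (L_*(ρ)=0 implies ρ=σ for density matrices ρ); (ii) the commutant of {A_j : j∈J} equals ℂ·Id; (iii) L_0 = Σ_j L_{A_j} is ergodic, i.e. L_0(X)=0 implies X = λ·Id for some scalar λ. -/

import Mathlib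

noncomputable section

open Matrix MeasureTheory
open scoped Kronecker ComplexOrder

attribute [local instance] Matrix.frobeniusNormedAddCommGroup Matrix.frobeniusNormedSpace
attribute [local instance] Classical.propDecidable

/-- Logarithm of a Hermitian matrix via the spectral functional calculus
(junk value `0` on non-Hermitian matrices). -/
def mlog {n : Type*} [Fintype n] [DecidableEq n] (A : Matrix n n ℂ) : Matrix n n ℂ :=
  if h : A.IsHermitian then h.cfc Real.log else 0

/-- Square root of a positive semidefinite matrix (junk value `0` otherwise). -/
def msqrt {n : Type*} [Fintype n] [DecidableEq n] (A : Matrix n n ℂ) : Matrix n n ℂ :=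
  if h : A.PosSemidef then
    h.1.eigenvectorUnitary.1 * diagonal ((↑) ∘ Real.sqrt ∘ h.1.eigenvalues) *
      (star h.1.eigenvectorUnitary : Matrix n n ℂ) else 0

/-- Real power of a Hermitian matrix via the spectral functional calculus. -/
def mpow {n : Type*} [Fintype n] [DecidableEq n] (A : Matrix n n ℂ) (p : ℝ) : Matrix n n ℂ :=
  if h : A.IsHermitian then h.cfc (fun x => Real.rpow x p) else 0

/-- The map `Γ_σ(X) = σ^{1/2} X σ^{1/2}`. -/
def Gam {n : Type*} [Fintype n] [DecidableEq n] (σ X : Matrix n n ℂ) : Matrix n n ℂ :=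
  msqrt σ * X * msqrt σ

/-- A density matrix: positive semidefinite with unit trace. -/
def IsDensity {n : Type*} [Fintype n] (ρ : Matrix n n ℂ) : Prop :=
  ρ.PosSemidef ∧ ρ.trace = 1

/-- Quantum relative entropy `D(ρ‖σ) = tr(ρ(ln ρ − ln σ))`. -/
def relEnt {n : Type*} [Fintype n] [DecidableEq n] (ρ σ : Matrix n n ℂ) : ℝ :=
  ((ρ * (mlog ρ - mlog σ)).trace).re

/-- Lindblad's relative entropy for non-normalized positive operators:
`D_Lin(ρ‖σ) = tr(ρ(ln ρ − ln σ)) + tr σ − tr ρ`. -/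
def DLin {n : Type*} [Fintype n] [DecidableEq n] (ρ σ : Matrix n n ℂ) : ℝ :=
  ((ρ * (mlog ρ - mlog σ)).trace).re + (σ.trace).re - (ρ.trace).re

/-- GKLS generator (Heisenberg picture) of a detailed-balance quantum Markov semigroup:
`L(X) = −Σ_j (e^{−ω_j/2} A_j^*[X,A_j] + e^{ω_j/2}[A_j,X]A_j^*)`. -/
def lindbladGen {n : Type*} [Fintype n] {J : Type*} [Fintype J]
    (A : J → Matrix n n ℂ) (ω : J → ℝ) (X : Matrix n n ℂ) : Matrix n n ℂ :=
  -∑ j, ((Real.exp (-ω j / 2) : ℂ) • ((A j)ᴴ * (X * A j - A j * X)) +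
         (Real.exp (ω j / 2) : ℂ) • ((A j * X - X * A j) * (A j)ᴴ))

/-- Trace adjoint (Schrödinger picture generator):
`L_*(ρ) = Σ_j e^{−ω_j/2}(A_j^*A_jρ − A_jρA_j^*) + e^{ω_j/2}(ρA_jA_j^* − A_j^*ρA_j)`. -/
def lindbladStar {n : Type*} [Fintype n] {J : Type*} [Fintype J]
    (A : J → Matrix n n ℂ) (ω : J → ℝ) (ρ : Matrix n n ℂ) : Matrix n n ℂ :=
  ∑ j, ((Real.exp (-ω j / 2) : ℂ) • ((A j)ᴴ * A j * ρ - A j * ρ * (A j)ᴴ) +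
        (Real.exp (ω j / 2) : ℂ) • (ρ * (A j * (A j)ᴴ) - (A j)ᴴ * ρ * A j))

/-- Entropy production `EP_L(ρ) = tr(L_*(ρ)(ln ρ − ln σ))` (extended to
non-normalized positive `ρ`), where `σ` is the reference (invariant) state. -/
def EP {n : Type*} [Fintype n] [DecidableEq n] {J : Type*} [Fintype J]
    (A : J → Matrix n n ℂ) (ω : J → ℝ) (σ ρ : Matrix n n ℂ) : ℝ :=
  ((lindbladStar A ω ρ * (mlog ρ - mlog σ)).trace).re

/-- Modified logarithmic Sobolev constant of a primitive semigroup with invariant state `σ`: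
the largest `α` with `α D(ρ‖σ) ≤ EP_L(ρ)` for all densities `ρ`. -/
def mlsiConst {n : Type*} [Fintype n] [DecidableEq n] {J : Type*} [Fintype J]
    (A : J → Matrix n n ℂ) (ω : J → ℝ) (σ : Matrix n n ℂ) : ℝ :=
  sSup {α : ℝ | ∀ ρ : Matrix n n ℂ, IsDensity ρ → α * relEnt ρ σ ≤ EP A ω σ ρ}

/-- Partial trace over the first tensor factor. -/
def ptraceFst {n m : Type*} [Fintype n] (ρ : Matrix (n × m) (n × m) ℂ) : Matrix m m ℂ :=
  Matrix.of fun a b => ∑ i, ρ (i, a) (i, b)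

/-- Partial trace over the second tensor factor. -/
def ptraceSnd {n m : Type*} [Fintype m] (ρ : Matrix (n × m) (n × m) ℂ) : Matrix n n ℂ :=
  Matrix.of fun i j => ∑ a, ρ (i, a) (j, a)

/-- Complete modified logarithmic Sobolev constant (primitive case): the largest `α` with
`α D(ρ‖(E_*⊗id_R)(ρ)) ≤ EP_{L⊗id_R}(ρ)` for every finite-dimensional reference system `R`
and every density `ρ` on `H ⊗ H_R`; here `(E_*⊗id_R)(ρ) = σ ⊗ tr_H ρ`. -/
def clsiConst {n : Type*} [Fintype n] [DecidableEq n] {J : Type*} [Fintype J]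
    (A : J → Matrix n n ℂ) (ω : J → ℝ) (σ : Matrix n n ℂ) : ℝ :=
  sSup {α : ℝ | ∀ (r : ℕ) (ρ : Matrix (n × Fin r) (n × Fin r) ℂ), IsDensity ρ →
    α * relEnt ρ (σ ⊗ₖ ptraceFst ρ) ≤
      EP (fun j => A j ⊗ₖ (1 : Matrix (Fin r) (Fin r) ℂ)) ω (σ ⊗ₖ ptraceFst ρ) ρ}

/-- `Φ ⊗ id` of a superoperator `Φ`, acting on matrices over a product index set. -/
def tensorIdFun {n m : Type*} (Φ : Matrix n n ℂ → Matrix n n ℂ)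
    (ρ : Matrix (n × m) (n × m) ℂ) : Matrix (n × m) (n × m) ℂ :=
  Matrix.of fun p q => Φ (Matrix.of fun i j => ρ (i, p.2) (j, q.2)) p.1 q.1

/-- Double operator integral `[ρ]_ω^{-1} = ∫_0^∞ (r + e^{−ω/2}L_ρ)^{−1}(r + e^{ω/2}R_ρ)^{−1} dr`
applied to `X`. -/
def doiInv {n : Type*} [Fintype n] [DecidableEq n] (ρ : Matrix n n ℂ) (ω : ℝ)
    (X : Matrix n n ℂ) : Matrix n n ℂ :=
  ∫ r in Set.Ioi (0 : ℝ),
    ((r : ℂ) • (1 : Matrix n n ℂ) + (Real.exp (-ω / 2) : ℂ) • ρ)⁻¹ * X *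
      ((r : ℂ) • (1 : Matrix n n ℂ) + (Real.exp (ω / 2) : ℂ) • ρ)⁻¹

/-- Operator (spectral) norm `‖X‖_∞` of a matrix. -/
def opN {n : Type*} [Fintype n] [DecidableEq n] (X : Matrix n n ℂ) : ℝ :=
  ‖Matrix.toEuclideanCLM (𝕜 := ℂ) X‖


/-!
Conjugation by `S = σ^{1/2}` intertwines the two pictures, `L_*(S X S) = S L(X) S`, because the
modular relation `σ A_j = e^{-ω_j} A_j σ` descends to `S A_j = e^{-ω_j/2} A_j S` (the difference
solves a Sylvester equation with positive coefficients). In the GNS inner product,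
`tr(σ X^* L(X)) = Σ_j e^{-ω_j/2} tr(σ [A_j,X]^* [A_j,X]) ≥ 0`, so `L(X) = 0` forces `X` into the
commutant; the case `σ = 1`, `ω = 0` handles `L_0`. Hence every stationary state is `S X S` with
`X` in the commutant. Conversely, a positive element `P` of the commutant gives the stationary
state `S P S` (normalised), so primitivity makes `P` scalar; as the commutant is *-closed, it is
spanned by its positive elements.
-/

open scoped MatrixOrder

namespace Matrix

variable {n : Type*} [Fintype n]

theorem PosDef.exists_posDef_mul_self_eq [DecidableEq n] {σ : Matrix n n ℂ} (hσ : σ.PosDef) :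
    ∃ S : Matrix n n ℂ, S.PosDef ∧ S * S = σ :=
  ⟨CFC.sqrt σ, (hσ.isStrictlyPositive.sqrt).posDef, CFC.sqrt_mul_sqrt_self σ hσ.posSemidef.nonneg⟩

theorem PosSemidef.trace_mul_conjTranspose_mul_nonneg {σ : Matrix n n ℂ} (hσ : σ.PosSemidef)
    (C : Matrix n n ℂ) : 0 ≤ (σ * Cᴴ * C).trace :=
  trace_mul_cycle σ Cᴴ C ▸ (hσ.mul_mul_conjTranspose_same C).trace_nonneg

theorem PosDef.eq_zero_of_trace_mul_conjTranspose_mul [DecidableEq n] {σ C : Matrix n n ℂ}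
    (hσ : σ.PosDef) (h : (σ * Cᴴ * C).trace = 0) : C = 0 := by
  obtain ⟨S, hS, rfl⟩ := hσ.exists_posDef_mul_self_eq
  have hSh : Sᴴ = S := hS.isHermitian
  have : (C * S)ᴴ * (C * S) = S * (Cᴴ * C) * S := by
    rw [conjTranspose_mul, hSh]; simp only [mul_assoc]
  have hCS : C * S = 0 := by
    rw [← trace_conjTranspose_mul_self_eq_zero_iff, this, trace_mul_cycle, ← h]
    simp only [mul_assoc]
  exact hS.isUnit.mul_left_eq_zero.mp hCS

theorem PosDef.eq_zero_of_mul_eq_neg_smul_mul [DecidableEq n] {S B : Matrix n n ℂ}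
    (hS : S.PosDef) {k : ℝ} (hk : 0 < k) (h : S * B = -(k : ℂ) • (B * S)) : B = 0 := by
  have hx := hS.posSemidef.trace_mul_conjTranspose_mul_nonneg Bᴴ
  have hy := hS.posSemidef.trace_mul_conjTranspose_mul_nonneg B
  have hxy : (S * Bᴴᴴ * Bᴴ).trace = -(k : ℂ) * (S * Bᴴ * B).trace := by
    rw [conjTranspose_conjTranspose, h, smul_mul_assoc, trace_smul, smul_eq_mul, mul_assoc,
      trace_mul_comm, mul_assoc]
  have hx0 : (S * Bᴴᴴ * Bᴴ).trace = 0 := by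
    refine le_antisymm ?_ hx
    rw [hxy, neg_mul, neg_nonpos]
    exact mul_nonneg (by exact_mod_cast hk.le) hy
  simpa using hS.eq_zero_of_trace_mul_conjTranspose_mul hx0

theorem PosDef.mul_eq_smul_mul_of_mul_self_mul [DecidableEq n] {S A : Matrix n n ℂ}
    (hS : S.PosDef) {a : ℝ} (ha : 0 < a) (h : S * S * A = ((a * a : ℝ) : ℂ) • (A * (S * S))) :
    S * A = (a : ℂ) • (A * S) := by
  set B := S * A - (a : ℂ) • (A * S)
  have hB : S * B = -(a : ℂ) • (B * S) := by
    simp only [B, mul_sub, sub_mul, mul_smul_comm, smul_mul_assoc, ← mul_assoc, h]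
    simp only [mul_assoc]
    module
  exact sub_eq_zero.mp (hS.eq_zero_of_mul_eq_neg_smul_mul ha hB)

theorem IsHermitian.exists_posSemidef_sub_smul_one [DecidableEq n] {Y : Matrix n n ℂ}
    (hY : Y.IsHermitian) : ∃ r : ℝ, (Y - (r : ℂ) • 1).PosSemidef := by
  obtain ⟨r, hr⟩ := (hY.spectrum_real_eq_range_eigenvalues ▸ Set.finite_range _).bddBelow
  refine ⟨r, ?_⟩
  have := algebraMap_le_of_le_spectrum (A := Matrix n n ℂ) (a := Y) fun x hx => hr hx
  rwa [Matrix.le_iff, Algebra.algebraMap_eq_smul_one, ← Complex.coe_smul] at this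

theorem IsHermitian.conjTranspose_mul_eq_smul_mul {S A : Matrix n n ℂ} (hS : S.IsHermitian)
    {a : ℝ} (h : S * A = (a : ℂ) • (A * S)) : Aᴴ * S = (a : ℂ) • (S * Aᴴ) := by
  simpa only [conjTranspose_mul, conjTranspose_smul, hS.eq, Complex.star_def,
    Complex.conj_ofReal] using congrArg (·ᴴ) h

end Matrix

section Lindblad

variable {n J : Type*} [Fintype n] [Fintype J] {A : J → Matrix n n ℂ} {ω : J → ℝ}

theorem lindbladGen_eq_zero_of_commute (ω : J → ℝ) {X : Matrix n n ℂ}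
    (hX : ∀ j, Commute (A j) X) : lindbladGen A ω X = 0 := by
  have hX' : ∀ j, A j * X = X * A j := fun j => (hX j).eq
  simp [lindbladGen, hX']

theorem lindbladStar_conj {S : Matrix n n ℂ} (hS : S.IsHermitian)
    (hSA : ∀ j, S * A j = (Real.exp (-ω j / 2) : ℂ) • (A j * S)) (X : Matrix n n ℂ) :
    lindbladStar A ω (S * X * S) = S * lindbladGen A ω X * S := by
  rw [lindbladStar, lindbladGen, mul_neg, neg_mul, Finset.mul_sum, Finset.sum_mul,
    ← Finset.sum_neg_distrib]
  refine Finset.sum_congr rfl fun j _ => ?_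
  set a : ℂ := (Real.exp (-ω j / 2) : ℂ)
  set b : ℂ := (Real.exp (ω j / 2) : ℂ)
  have hab : a * b = 1 := by
    rw [← Complex.ofReal_mul, ← Real.exp_add, neg_div, neg_add_cancel, Real.exp_zero,
      Complex.ofReal_one]
  have h1 : S * A j = a • (A j * S) := hSA j
  have h2 : A j * S = b • (S * A j) := by
    rw [h1, smul_smul, mul_comm, hab, one_smul]
  have h3 : (A j)ᴴ * S = a • (S * (A j)ᴴ) := hS.conjTranspose_mul_eq_smul_mul h1
  have h4 : S * (A j)ᴴ = b • ((A j)ᴴ * S) := by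
    rw [h3, smul_smul, mul_comm, hab, one_smul]
  have hAdA : (A j)ᴴ * A j * (S * X * S) = S * ((A j)ᴴ * A j * X) * S := by
    calc _ = (A j)ᴴ * (A j * S) * X * S := by simp only [mul_assoc]
      _ = _ := by
        rw [h2, mul_smul_comm, ← mul_assoc (A j)ᴴ, h3]
        simp only [smul_mul_assoc, smul_smul, mul_comm b, hab, one_smul, mul_assoc]
  have hAAd : S * X * S * (A j * (A j)ᴴ) = S * (X * (A j * (A j)ᴴ)) * S := by
    calc _ = S * X * (S * A j * (A j)ᴴ) := by simp only [mul_assoc]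
      _ = _ := by
        rw [h1, smul_mul_assoc, mul_assoc (A j), h4]
        simp only [mul_smul_comm, smul_smul, hab, one_smul, mul_assoc]
  have hAXAd : A j * (S * X * S) * (A j)ᴴ = (b * b) • (S * (A j * X * (A j)ᴴ) * S) := by
    calc _ = (A j * S) * X * (S * (A j)ᴴ) := by simp only [mul_assoc]
      _ = _ := by rw [h2, h4]; simp only [smul_mul_assoc, mul_smul_comm, smul_smul, mul_assoc]
  have hAdXA : (A j)ᴴ * (S * X * S) * A j = (a * a) • (S * ((A j)ᴴ * X * A j) * S) := by
    calc _ = ((A j)ᴴ * S) * X * (S * A j) := by simp only [mul_assoc]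
      _ = _ := by rw [h1, h3]; simp only [smul_mul_assoc, mul_smul_comm, smul_smul, mul_assoc]
  rw [hAdA, hAAd, hAXAd, hAdXA]
  -- what is left are the scalar identities `a b² = b` and `b a² = a`
  simp only [mul_sub, sub_mul, mul_add, add_mul, mul_smul_comm, smul_mul_assoc, mul_assoc]
  linear_combination (norm := module)
    hab • -(b • (S * (A j * (X * ((A j)ᴴ * S)))) + a • (S * ((A j)ᴴ * (X * (A j * S)))))

theorem trace_mul_conjTranspose_mul_lindbladGen {σ : Matrix n n ℂ} (hσ : σ.IsHermitian)
    (hσA : ∀ j, σ * A j = (Real.exp (-ω j) : ℂ) • (A j * σ)) (X : Matrix n n ℂ) :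
    (σ * Xᴴ * lindbladGen A ω X).trace =
      ∑ j, (Real.exp (-ω j / 2) : ℂ) *
        (σ * (A j * X - X * A j)ᴴ * (A j * X - X * A j)).trace := by
  simp only [lindbladGen, mul_neg, Finset.mul_sum, trace_neg, trace_sum,
    ← Finset.sum_neg_distrib]
  refine Finset.sum_congr rfl fun j _ => ?_
  set C := A j * X - X * A j
  have hbc : (Real.exp (ω j / 2) : ℂ) * (Real.exp (-ω j) : ℂ) = (Real.exp (-ω j / 2) : ℂ) := by
    rw [← Complex.ofReal_mul, ← Real.exp_add]; ring_nf
  have hAσ : (A j)ᴴ * σ = (Real.exp (-ω j) : ℂ) • (σ * (A j)ᴴ) :=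
    hσ.conjTranspose_mul_eq_smul_mul (hσA j)
  have hcycle : (σ * Xᴴ * (C * (A j)ᴴ)).trace =
      (Real.exp (-ω j) : ℂ) * (σ * ((A j)ᴴ * (Xᴴ * C))).trace := by
    rw [← mul_assoc, trace_mul_comm, ← mul_assoc, ← mul_assoc, hAσ]
    simp only [smul_mul_assoc, trace_smul, smul_eq_mul, mul_assoc]
  have hC : Cᴴ = Xᴴ * (A j)ᴴ - (A j)ᴴ * Xᴴ := by
    simp only [C, conjTranspose_sub, conjTranspose_mul]
  rw [mul_add, trace_add, mul_smul_comm, mul_smul_comm, trace_smul, trace_smul, smul_eq_mul,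
    smul_eq_mul, hcycle, hC]
  simp only [C, mul_sub, sub_mul, trace_sub, mul_assoc]
  linear_combination
    ((σ * ((A j)ᴴ * (Xᴴ * (X * A j)))).trace - (σ * ((A j)ᴴ * (Xᴴ * (A j * X)))).trace) * hbc

theorem commute_of_lindbladGen_eq_zero [DecidableEq n] {σ : Matrix n n ℂ} (hσ : σ.PosDef)
    (hσA : ∀ j, σ * A j = (Real.exp (-ω j) : ℂ) • (A j * σ)) {X : Matrix n n ℂ}
    (hX : lindbladGen A ω X = 0) (j : J) : Commute (A j) X := by
  have hsum := trace_mul_conjTranspose_mul_lindbladGen hσ.isHermitian hσA X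
  rw [hX, mul_zero, trace_zero, eq_comm, Finset.sum_eq_zero_iff_of_nonneg fun k _ =>
    mul_nonneg (Complex.zero_le_real.mpr (Real.exp_pos _).le)
      (hσ.posSemidef.trace_mul_conjTranspose_mul_nonneg _)] at hsum
  have hj := (mul_eq_zero.mp (hsum j (Finset.mem_univ j))).resolve_left
    (Complex.ofReal_ne_zero.mpr (Real.exp_pos _).ne')
  exact sub_eq_zero.mp (hσ.eq_zero_of_trace_mul_conjTranspose_mul hj)

end Lindblad

section Primitivity

variable {n J : Type*} [Fintype n] [DecidableEq n] {A : J → Matrix n n ℂ} {ω : J → ℝ}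
  {σ S : Matrix n n ℂ}

theorem exists_sqrt_mul_eq_smul_mul (hσ : σ.PosDef)
    (hσA : ∀ j, σ * A j = (Real.exp (-ω j) : ℂ) • (A j * σ)) :
    ∃ S : Matrix n n ℂ, S.PosDef ∧ S * S = σ ∧
      ∀ j, S * A j = (Real.exp (-ω j / 2) : ℂ) • (A j * S) := by
  obtain ⟨S, hS, hSσ⟩ := hσ.exists_posDef_mul_self_eq
  refine ⟨S, hS, hSσ, fun j => hS.mul_eq_smul_mul_of_mul_self_mul (Real.exp_pos _) ?_⟩
  rw [hSσ, ← Real.exp_add, add_halves, hσA]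

variable [Fintype J]

theorem exists_eq_smul_one_of_posSemidef_of_primitive
    (hprim : ∀ ρ : Matrix n n ℂ, IsDensity ρ → lindbladStar A ω ρ = 0 → ρ = σ)
    (hS : S.PosDef) (hSσ : S * S = σ) (hσtr : σ.trace = 1)
    (hSA : ∀ j, S * A j = (Real.exp (-ω j / 2) : ℂ) • (A j * S))
    {P : Matrix n n ℂ} (hP : P.PosSemidef) (hPA : ∀ j, Commute (A j) P) :
    ∃ c : ℂ, P = c • 1 := by
  have hSh : Sᴴ = S := hS.isHermitian
  set t := (S * P * S).trace
  have ht : 0 < t + 1 :=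
    add_pos_of_nonneg_of_pos (hSh ▸ hP.mul_mul_conjTranspose_same S).trace_nonneg one_pos
  -- the shift by `1` keeps the normalisation possible when `S P S = 0`
  set Q := (t + 1)⁻¹ • (P + 1)
  have hQ : IsDensity (S * Q * S) := by
    refine ⟨?_, ?_⟩
    · have := (hP.add PosSemidef.one).smul (RCLike.inv_pos_of_pos ht).le
      simpa only [hSh] using this.mul_mul_conjTranspose_same S
    · have : S * Q * S = (t + 1)⁻¹ • (S * P * S + σ) := by
        simp only [Q, mul_smul_comm, smul_mul_assoc, mul_add, add_mul, mul_one, hSσ]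
      rw [this, trace_smul, trace_add, hσtr, smul_eq_mul]
      exact inv_mul_cancel₀ ht.ne'
  have hQA : ∀ j, Commute (A j) Q := fun j =>
    ((hPA j).add_right (Commute.one_right _)).smul_right _
  have hQσ := hprim _ hQ <| by
    rw [lindbladStar_conj hS.isHermitian hSA, lindbladGen_eq_zero_of_commute ω hQA, mul_zero,
      zero_mul]
  have hQ1 : Q = 1 := hS.isUnit.mul_left_cancel <| hS.isUnit.mul_right_cancel <| by
    rw [hQσ, ← hSσ, mul_one]
  refine ⟨t, ?_⟩
  have hP1 : P + 1 = (t + 1) • 1 := by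
    rw [← inv_smul_eq_iff₀ ht.ne']
    exact hQ1
  linear_combination (norm := module) hP1

open ComplexStarModule in
theorem exists_eq_smul_one_of_primitive (hσ : σ.PosDef) (hσtr : σ.trace = 1)
    (hσA : ∀ j, σ * A j = (Real.exp (-ω j) : ℂ) • (A j * σ))
    (hsa : Set.range (fun j => (A j)ᴴ) = Set.range A)
    (hprim : ∀ ρ : Matrix n n ℂ, IsDensity ρ → lindbladStar A ω ρ = 0 → ρ = σ)
    {X : Matrix n n ℂ} (hXA : ∀ j, Commute (A j) X) : ∃ c : ℂ, X = c • 1 := by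
  obtain ⟨S, hS, hSσ, hSA⟩ := exists_sqrt_mul_eq_smul_mul hσ hσA
  have hscalar (Y : Matrix n n ℂ) (hY : Y.IsHermitian) (hYA : ∀ j, Commute (A j) Y) :
      ∃ c : ℂ, Y = c • 1 := by
    obtain ⟨r, hr⟩ := hY.exists_posSemidef_sub_smul_one
    obtain ⟨c, hc⟩ := exists_eq_smul_one_of_posSemidef_of_primitive hprim hS hSσ hσtr hSA hr
      fun j => (hYA j).sub_right ((Commute.one_right _).smul_right _)
    exact ⟨c + r, by rw [add_smul, ← hc, sub_add_cancel]⟩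
  have hXA' (j : J) : Commute (A j) (star X) := by
    obtain ⟨k, hk⟩ : (A j)ᴴ ∈ Set.range A := hsa ▸ ⟨j, rfl⟩
    have := (hXA k).star_star
    rwa [hk, star_eq_conjTranspose, conjTranspose_conjTranspose] at this
  obtain ⟨a, ha⟩ := hscalar _ (ℜ X).2 fun j => by
    rw [realPart_apply_coe]
    exact ((hXA j).add_right (hXA' j)).smul_right _
  obtain ⟨b, hb⟩ := hscalar _ (ℑ X).2 fun j => by
    rw [imaginaryPart_apply_coe]
    exact (((hXA j).sub_right (hXA' j)).smul_right _).smul_right _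
  exact ⟨a + Complex.I * b, by
    rw [← realPart_add_I_smul_imaginaryPart X, ha, hb, add_smul, smul_smul]⟩

theorem eq_of_lindbladStar_eq_zero (hσ : σ.PosDef) (hσtr : σ.trace = 1)
    (hσA : ∀ j, σ * A j = (Real.exp (-ω j) : ℂ) • (A j * σ))
    (hcomm : ∀ X : Matrix n n ℂ, (∀ j, Commute (A j) X) → ∃ c : ℂ, X = c • 1)
    {ρ : Matrix n n ℂ} (hρ : IsDensity ρ) (hρ0 : lindbladStar A ω ρ = 0) : ρ = σ := by
  obtain ⟨S, hS, hSσ, hSA⟩ := exists_sqrt_mul_eq_smul_mul hσ hσA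
  have hSdet := (isUnit_iff_isUnit_det S).mp hS.isUnit
  obtain ⟨X, hX⟩ : ∃ X, S * X * S = ρ := ⟨S⁻¹ * ρ * S⁻¹, by
    simp only [mul_assoc, nonsing_inv_mul _ hSdet, mul_one,
      mul_nonsing_inv_cancel_left _ _ hSdet]⟩
  have hLX : lindbladGen A ω X = 0 :=
    hS.isUnit.mul_left_cancel <| hS.isUnit.mul_right_cancel <| by
      rw [← lindbladStar_conj hS.isHermitian hSA, hX, hρ0, mul_zero, zero_mul]
  obtain ⟨c, hc⟩ := hcomm X (commute_of_lindbladGen_eq_zero hσ hσA hLX)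
  have hρc : ρ = c • σ := by rw [← hX, hc, mul_smul_comm, smul_mul_assoc, mul_one, hSσ]
  have hc1 : c = 1 := by simpa [hρc, hσtr] using hρ.2
  rw [hρc, hc1, one_smul]

end Primitivity

theorem primitivity_tfae_general {d : ℕ} {J : Type} [Fintype J]
    (A : J → Matrix (Fin d) (Fin d) ℂ) (ω : J → ℝ)
    (σ : Matrix (Fin d) (Fin d) ℂ) (hσ : σ.PosDef) (hσtr : σ.trace = 1)
    (hsa : Set.range (fun j => (A j)ᴴ) = Set.range A)
    (hmod : ∀ j, σ * A j = (Real.exp (-ω j) : ℂ) • (A j * σ)) :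
    List.TFAE [
      (∀ ρ : Matrix (Fin d) (Fin d) ℂ, IsDensity ρ → lindbladStar A ω ρ = 0 → ρ = σ),
      (∀ X : Matrix (Fin d) (Fin d) ℂ, (∀ j, A j * X = X * A j) →
        ∃ c : ℂ, X = c • (1 : Matrix (Fin d) (Fin d) ℂ)),
      (∀ X : Matrix (Fin d) (Fin d) ℂ, lindbladGen A (fun _ => 0) X = 0 →
        ∃ c : ℂ, X = c • (1 : Matrix (Fin d) (Fin d) ℂ))] := by
  tfae_have 1 → 2 := fun hprim X hX =>
    exists_eq_smul_one_of_primitive hσ hσtr hmod hsa hprim hX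
  tfae_have 2 → 1 := fun hcomm ρ hρ hρ0 =>
    eq_of_lindbladStar_eq_zero hσ hσtr hmod hcomm hρ hρ0
  tfae_have 2 → 3 := fun hcomm X hX =>
    hcomm X (commute_of_lindbladGen_eq_zero PosDef.one (by simp) hX)
  tfae_have 3 → 2 := fun herg X hX => herg X (lindbladGen_eq_zero_of_commute _ hX)
  tfae_finish

/-- **Characterization of primitivity (Lemma `ergodic`).** For a GNS-symmetric Lindblad
generator `L` with respect to a full-rank state `σ`, with Lindblad operators `{A_j}` and
Bohr frequencies `ω_j`, the following are equivalent:
(i) `L` is primitive with respect to `σ` (`L_*(ρ) = 0` implies `ρ = σ` for densities);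
(ii) the commutant of `{A_j : j ∈ J}` is `ℂ·Id`;
(iii) `L_0 = Σ_j L_{A_j}` is ergodic (`L_0(X) = 0` implies `X = λ·Id`). -/
theorem primitivity_tfae {d : ℕ} {J : Type} [Fintype J]
    (A : J → Matrix (Fin d) (Fin d) ℂ) (ω : J → ℝ)
    (σ : Matrix (Fin d) (Fin d) ℂ) (hσ : σ.PosDef) (hσtr : σ.trace = 1)
    (hsa : Set.range (fun j => (A j)ᴴ) = Set.range A)
    (hmod : ∀ j, σ * A j = (Real.exp (-ω j) : ℂ) • (A j * σ))
    (hinv : lindbladStar A ω σ = 0) :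
    List.TFAE [
      (∀ ρ : Matrix (Fin d) (Fin d) ℂ, IsDensity ρ → lindbladStar A ω ρ = 0 → ρ = σ),
      (∀ X : Matrix (Fin d) (Fin d) ℂ, (∀ j, A j * X = X * A j) →
        ∃ c : ℂ, X = c • (1 : Matrix (Fin d) (Fin d) ℂ)),
      (∀ X : Matrix (Fin d) (Fin d) ℂ, lindbladGen A (fun _ => 0) X = 0 →
        ∃ c : ℂ, X = c • (1 : Matrix (Fin d) (Fin d) ℂ))] :=
  primitivity_tfae_general A ω σ hσ hσtr hsa hmod
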